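/- Let α > 1 be an irrational real number. Then as t → 0⁺, E_α(t) = E_α(0) + o(1), where E_α(0) = −∑_{ℓ≥1} ( {αℓ}/(αℓ) + log(1 − {αℓ}/(αℓ)) ). -/

import Mathlib

open Filter Topology Real Asymptotics

/-- `K(u) = u²/sinh²(u)` for `u ≠ 0`, with `K(0) = 1`. -/
noncomputable def KKer (u : ℝ) : ℝ :=
  if u = 0 then 1 else u ^ 2 / Real.sinh u ^ 2

/-- `E_α(t) = ∑_{ℓ ≥ 1} ∫₀^{{αℓ}} ∫₀^u K((αℓ - v)t/2)/(αℓ - v)² dv du`. -/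
noncomputable def EBeatty (α : ℝ) (t : ℝ) : ℝ :=
  ∑' ℓ : ℕ, ∫ u in (0 : ℝ)..Int.fract (α * (ℓ + 1)),
    ∫ v in (0 : ℝ)..u, KKer ((α * (ℓ + 1) - v) * t / 2) / (α * (ℓ + 1) - v) ^ 2

/-
Each summand of `E_α(t)` is the double integral `beattyTerm b c t` with `b = αℓ`, `c = {αℓ}`.
Since `0 ≤ K ≤ 1`, it is bounded uniformly in `t` by `c² / (b - c)² ≤ (α - 1)⁻² ℓ⁻²`, and it is
continuous in `t`; by the Weierstrass M-test `E_α` is continuous. At `t = 0` the kernel is `1` and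
the double integral of `(b - v)⁻²` is elementary.
-/

open MeasureTheory intervalIntegral Set

lemma dslope_sinh_ne_zero (u : ℝ) : dslope sinh 0 u ≠ 0 := by
  rcases eq_or_ne u 0 with rfl | hu
  · simp [dslope_same]
  · simp [dslope_of_ne _ hu, slope_def_field, hu]

lemma KKer_eq_inv_dslope_sinh_sq : KKer = fun u => (dslope sinh 0 u)⁻¹ ^ 2 := by
  funext u
  rcases eq_or_ne u 0 with rfl | hu
  · simp [KKer, dslope_same]
  · simp [KKer, dslope_of_ne _ hu, slope_def_field, hu, div_pow]

lemma continuous_KKer : Continuous KKer := by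
  have : Continuous (dslope sinh 0) := by
    rw [← continuousOn_univ, continuousOn_dslope univ_mem]
    exact ⟨continuous_sinh.continuousOn, differentiable_sinh 0⟩
  rw [KKer_eq_inv_dslope_sinh_sq]
  exact (this.inv₀ dslope_sinh_ne_zero).pow 2

lemma KKer_nonneg (u : ℝ) : 0 ≤ KKer u := by
  unfold KKer; split_ifs <;> positivity

lemma KKer_le_one (u : ℝ) : KKer u ≤ 1 := by
  unfold KKer
  split_ifs with hu
  · rfl
  · rw [div_le_one (by positivity [sinh_ne_zero.mpr hu]), ← sq_abs, ← sq_abs (sinh u), abs_sinh]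
    exact pow_le_pow_left₀ (abs_nonneg u) (self_le_sinh_iff.mpr (abs_nonneg u)) 2

lemma norm_KKer_div_sq_le {x y d : ℝ} (hd : 0 < d) (hdy : d ≤ y) :
    ‖KKer x / y ^ 2‖ ≤ (d ^ 2)⁻¹ := by
  rw [Real.norm_of_nonneg (div_nonneg (KKer_nonneg x) (sq_nonneg y)), ← one_div]
  exact div_le_div₀ zero_le_one (KKer_le_one x) (by positivity) (by gcongr)

lemma integral_inv_sub_sq {a b u : ℝ} (hb : b ∉ uIcc a u) :
    ∫ v in a..u, ((b - v) ^ 2)⁻¹ = (b - u)⁻¹ - (b - a)⁻¹ := by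
  have hne : ∀ v ∈ uIcc a u, b - v ≠ 0 := fun v hv =>
    sub_ne_zero.2 (ne_of_mem_of_not_mem hv hb).symm
  refine integral_eq_sub_of_hasDerivAt (f := fun v => (b - v)⁻¹)
    (f' := fun v => ((b - v) ^ 2)⁻¹) (fun v hv => ?_) ?_
  · simpa using ((hasDerivAt_id' (x := v)).const_sub b).fun_inv (hne v hv)
  · exact (((continuousOn_const.sub continuousOn_id).pow 2).inv₀
      fun v hv => pow_ne_zero 2 (hne v hv)).intervalIntegrable

lemma integral_inv_sub_sub_inv {b c : ℝ} (hc : 0 ≤ c) (hcb : c < b) :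
    ∫ u in (0 : ℝ)..c, ((b - u)⁻¹ - b⁻¹) = log (b / (b - c)) - c / b := by
  have hbc : 0 < b - c := sub_pos.2 hcb
  have hint : IntervalIntegrable (fun u => (b - u)⁻¹) volume 0 c :=
    ((continuousOn_const.sub continuousOn_id).inv₀ fun u hu => by
      rw [uIcc_of_le hc] at hu; simp only [Pi.sub_apply, id]; linarith [hu.2]).intervalIntegrable
  rw [integral_sub hint intervalIntegrable_const, integral_comp_sub_left (fun x => x⁻¹),
    integral_inv_of_pos hbc (by linarith), intervalIntegral.integral_const, sub_zero, sub_zero,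
    smul_eq_mul, div_eq_mul_inv c]

noncomputable def beattyTerm (b c t : ℝ) : ℝ :=
  ∫ u in (0 : ℝ)..c, ∫ v in (0 : ℝ)..u, KKer ((b - v) * t / 2) / (b - v) ^ 2

section

variable {b c : ℝ}

lemma norm_beattyTerm_le (hc : 0 ≤ c) (hcb : c < b) (t : ℝ) :
    ‖beattyTerm b c t‖ ≤ c ^ 2 / (b - c) ^ 2 := by
  have inner : ∀ u ∈ uIoc 0 c,
      ‖∫ v in (0 : ℝ)..u, KKer ((b - v) * t / 2) / (b - v) ^ 2‖ ≤ ((b - c) ^ 2)⁻¹ * c := by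
    intro u hu
    rw [uIoc_of_le hc] at hu
    calc _ ≤ ((b - c) ^ 2)⁻¹ * |u - 0| := norm_integral_le_of_norm_le_const fun v hv => by
            rw [uIoc_of_le hu.1.le] at hv
            exact norm_KKer_div_sq_le (sub_pos.2 hcb) (by linarith [hv.2, hu.2])
      _ ≤ ((b - c) ^ 2)⁻¹ * c := by
            rw [sub_zero, abs_of_pos hu.1]; gcongr; exact hu.2
  calc ‖beattyTerm b c t‖ ≤ ((b - c) ^ 2)⁻¹ * c * |c - 0| :=
        norm_integral_le_of_norm_le_const inner
    _ = c ^ 2 / (b - c) ^ 2 := by rw [sub_zero, abs_of_nonneg hc]; ring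

/- Clamping `v` to `min v c` leaves the integrand unchanged on the domain of integration but makes
it jointly continuous in `(t, v)` on all of `ℝ²`, away from the pole at `v = b`. -/
lemma beattyTerm_eq_of_min (hc : 0 ≤ c) : beattyTerm b c = fun t =>
    ∫ u in (0 : ℝ)..c, ∫ v in (0 : ℝ)..u,
      KKer ((b - min v c) * t / 2) / (b - min v c) ^ 2 := by
  funext t
  refine integral_congr fun u hu => integral_congr fun v hv => ?_
  rw [uIcc_of_le hc] at hu
  rw [uIcc_of_le hu.1] at hv
  simp only [min_eq_left (hv.2.trans hu.2)]

lemma continuous_beattyTerm (hc : 0 ≤ c) (hcb : c < b) : Continuous (beattyTerm b c) := by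
  have hpos : ∀ v, b - min v c ≠ 0 := fun v => by linarith [min_le_right v c]
  have hint : Continuous (Function.uncurry fun t v : ℝ =>
      KKer ((b - min v c) * t / 2) / (b - min v c) ^ 2) :=
    (continuous_KKer.comp (by fun_prop)).div (by fun_prop) fun p => pow_ne_zero 2 (hpos p.2)
  rw [beattyTerm_eq_of_min hc]
  exact continuous_parametric_intervalIntegral_of_continuous'
    (continuous_parametric_primitive_of_continuous (μ := volume) (a₀ := 0) hint) 0 c

lemma beattyTerm_zero (hc : 0 ≤ c) (hcb : c < b) :
    beattyTerm b c 0 = -(c / b + log (1 - c / b)) := by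
  have hb : 0 < b := hc.trans_lt hcb
  have inner : EqOn (fun u => ∫ v in (0 : ℝ)..u, ((b - v) ^ 2)⁻¹) (fun u => (b - u)⁻¹ - b⁻¹)
      (uIcc 0 c) := fun u hu => by
    rw [uIcc_of_le hc] at hu
    simpa using integral_inv_sub_sq (a := 0) (b := b) (u := u) fun hbu => by
      rw [uIcc_of_le hu.1] at hbu; linarith [hbu.2, hu.2]
  have hlog : log (1 - c / b) = -log (b / (b - c)) := by
    rw [← log_inv, inv_div, one_sub_div hb.ne']
  simp only [beattyTerm, KKer, mul_zero, zero_div, if_true, one_div]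
  rw [integral_congr inner, integral_inv_sub_sub_inv hc hcb, hlog]
  ring

end

lemma fract_lt_mul_succ {α : ℝ} (hα : 1 < α) (n : ℕ) : Int.fract (α * (n + 1)) < α * (n + 1) :=
  (Int.fract_lt_one _).trans (one_lt_mul_of_lt_of_le hα (by linarith [n.cast_nonneg (α := ℝ)]))

lemma norm_beattyTerm_fract_le {α : ℝ} (hα : 1 < α) (n : ℕ) (t : ℝ) :
    ‖beattyTerm (α * (n + 1)) (Int.fract (α * (n + 1))) t‖
      ≤ ((α - 1) ^ 2)⁻¹ * (((n : ℝ) + 1) ^ 2)⁻¹ := by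
  set b := α * (n + 1)
  set c := Int.fract b
  have hc1 : c < 1 := Int.fract_lt_one b
  have hd : 0 < (α - 1) * (n + 1) := mul_pos (by linarith) (by positivity)
  have hdb : (α - 1) * (n + 1) ≤ b - c := by simp only [b]; linarith
  calc ‖beattyTerm b c t‖ ≤ c ^ 2 / (b - c) ^ 2 :=
        norm_beattyTerm_le (Int.fract_nonneg b) (fract_lt_mul_succ hα n) t
    _ ≤ 1 / ((α - 1) * (n + 1)) ^ 2 := by
        gcongr
        exact pow_le_one₀ (Int.fract_nonneg b) hc1.le
    _ = ((α - 1) ^ 2)⁻¹ * (((n : ℝ) + 1) ^ 2)⁻¹ := by rw [one_div, mul_pow, mul_inv]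

lemma continuous_EBeatty {α : ℝ} (hα : 1 < α) : Continuous (EBeatty α) := by
  have hsum : Summable fun n : ℕ => (((n : ℝ) + 1) ^ 2)⁻¹ := by
    simpa using (summable_nat_add_iff 1).2 (Real.summable_nat_pow_inv.2 one_lt_two)
  exact continuous_tsum
    (fun n => continuous_beattyTerm (Int.fract_nonneg _) (fract_lt_mul_succ hα n))
    (hsum.mul_left _) (norm_beattyTerm_fract_le hα)

theorem stmt15_general (α : ℝ) (hα : 1 < α) :
    EBeatty α 0 = -∑' ℓ : ℕ, (Int.fract (α * (ℓ + 1)) / (α * (ℓ + 1))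
        + Real.log (1 - Int.fract (α * (ℓ + 1)) / (α * (ℓ + 1)))) ∧
    Tendsto (EBeatty α) (𝓝[>] (0 : ℝ)) (𝓝 (EBeatty α 0)) := by
  refine ⟨?_, (continuous_EBeatty hα).continuousAt.tendsto.mono_left nhdsWithin_le_nhds⟩
  rw [EBeatty, ← tsum_neg]
  exact tsum_congr fun n => beattyTerm_zero (Int.fract_nonneg _) (fract_lt_mul_succ hα n)

theorem stmt15 (α : ℝ) (hα : 1 < α) (hirr : Irrational α) :
    EBeatty α 0 = -∑' ℓ : ℕ, (Int.fract (α * (ℓ + 1)) / (α * (ℓ + 1))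
        + Real.log (1 - Int.fract (α * (ℓ + 1)) / (α * (ℓ + 1)))) ∧
    Tendsto (EBeatty α) (𝓝[>] (0 : ℝ)) (𝓝 (EBeatty α 0)) :=
  stmt15_general α hα
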